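/- For every universal coBüchi automaton A over Σ = I ∪ O and every k ∈ ℕ, the set W_k^A = { f ∈ CF(A,k) | L(D(A,k)[f]) is realizable } is downward closed for the pointwise order ⪯: if f_1 ⪯ f_2 and f_2 ∈ W_k^A then f_1 ∈ W_k^A. -/

import Mathlib

open scoped Classical

/-- A preMealy machine over input alphabet `I`, output alphabet `O`, with state type `M`. -/
structure PreMealy (I O M : Type) where
  init : M
  trans : M → I → Option (O × M)

namespace PreMealy

variable {I O M : Type}

/-- One step of a preMealy machine on a pair (input, output): defined iff the transition
on the input is defined and produces exactly the given output. -/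
noncomputable def step (P : PreMealy I O M) (m : M) (p : I × O) : Option M :=
  match P.trans m p.1 with
  | some (o, m') => if o = p.2 then some m' else none
  | none => none

/-- Running a preMealy machine on a finite word of (input, output) pairs. -/
noncomputable def runFrom (P : PreMealy I O M) : M → List (I × O) → Option M
  | m, [] => some m
  | m, p :: u =>
    match P.step m p with
    | some m' => runFrom P m' u
    | none => none

/-- The language `L(P)` of finite words in `(I·O)*` accepted by `P`. -/
def lang (P : PreMealy I O M) : Set (List (I × O)) :=
  { u | (P.runFrom P.init u).isSome }

/-- The ω-language `L_ω(P)`: ω-words all of whose finite prefixes belong to `L(P)`. -/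
def omegaLang (P : PreMealy I O M) : Set (ℕ → I × O) :=
  { w | ∀ n : ℕ, ((List.range n).map w) ∈ P.lang }

/-- `P` is a (complete) Mealy machine when its transition function is total. -/
def Total (P : PreMealy I O M) : Prop :=
  ∀ m i, (P.trans m i).isSome

/-- A hole of `P` is a pair (state, input) on which the transition is undefined. -/
def Hole (P : PreMealy I O M) (m : M) (i : I) : Prop :=
  P.trans m i = none

/-- `Left_p`: the set of finite words reaching state `p` from the initial state. -/
def leftLang (P : PreMealy I O M) (p : M) : Set (List (I × O)) :=
  { u | P.runFrom P.init u = some p }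

end PreMealy

/-- `P₁ ⪯ P₂`: `P₁` is a subgraph of `P₂`. -/
def Subgraph {I O M₁ M₂ : Type} (P₁ : PreMealy I O M₁) (P₂ : PreMealy I O M₂) : Prop :=
  ∃ Φ : M₁ → M₂, Function.Injective Φ ∧ Φ P₁.init = P₂.init ∧
    ∀ p i o q, P₁.trans p i = some (o, q) ↔ P₂.trans (Φ p) i = some (o, Φ q)

/-- `S` is `P`-realizable: some (finite-state, complete) Mealy machine extends `P`
and its ω-language is included in `S ⊆ (I·O)^ω`. -/
def PRealizable {I O M : Type} (P : PreMealy I O M) (S : Set (ℕ → I × O)) : Prop :=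
  ∃ (N : Type) (_ : Fintype N) (Mach : PreMealy I O N),
    Mach.Total ∧ Subgraph P Mach ∧ Mach.omegaLang ⊆ S

/-- Quotient (left derivative) of a set of ω-words by a finite word. -/
def wordQuot {α : Type} (u : List α) (S : Set (ℕ → α)) : Set (ℕ → α) :=
  { v | (fun n => if h : n < u.length then u.get ⟨n, h⟩ else v (n - u.length)) ∈ S }

/-- Interleaving of an ω-word over `I × O` into an ω-word over `Σ = I ⊕ O`. -/
def interleave {I O : Type} (w : ℕ → I × O) : ℕ → I ⊕ O :=
  fun n => if n % 2 = 0 then Sum.inl (w (n / 2)).1 else Sum.inr (w (n / 2)).2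

/-- Flattening of a finite word over `I × O` into a word over `Σ = I ⊕ O`. -/
def flattenWord {I O : Type} (u : List (I × O)) : List (I ⊕ O) :=
  u.flatMap fun p => [Sum.inl p.1, Sum.inr p.2]

/-- `P`-realizability of a specification over `Σ = I ⊕ O`. -/
def PRealizableSigma {I O M : Type} (P : PreMealy I O M) (S : Set (ℕ → I ⊕ O)) : Prop :=
  ∃ (N : Type) (_ : Fintype N) (Mach : PreMealy I O N),
    Mach.Total ∧ Subgraph P Mach ∧ ∀ w ∈ Mach.omegaLang, interleave w ∈ S

/-- Realizability of a specification over `Σ = I ⊕ O` by some Mealy machine. -/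
def RealizableSigma (I O : Type) (S : Set (ℕ → I ⊕ O)) : Prop :=
  ∃ (N : Type) (_ : Fintype N) (Mach : PreMealy I O N),
    Mach.Total ∧ ∀ w ∈ Mach.omegaLang, interleave w ∈ S

/-- A universal coBüchi automaton; `col1 q` means state `q` has color 1. -/
structure UCB (σ Q : Type) where
  init : Set Q
  δ : Q → σ → Set Q
  δ_ne : ∀ q a, (δ q a).Nonempty
  col1 : Q → Prop

namespace UCB

variable {σ Q : Type}

/-- `ρ` is a run of `A` on the ω-word `w`. -/
def Run (A : UCB σ Q) (w : ℕ → σ) (ρ : ℕ → Q) : Prop :=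
  ρ 0 ∈ A.init ∧ ∀ n, ρ (n + 1) ∈ A.δ (ρ n) (w n)

/-- `L^∀_k(A)`: every run visits 1-colored states at most `k` times. -/
def langK (A : UCB σ Q) (k : ℕ) : Set (ℕ → σ) :=
  { w | ∀ ρ : ℕ → Q, A.Run w ρ →
      ∀ s : Finset ℕ, (∀ j ∈ s, A.col1 (ρ j)) → s.card ≤ k }

/-- `L^∀(A)`: every run visits 1-colored states only finitely often. -/
def langForall (A : UCB σ Q) : Set (ℕ → σ) :=
  { w | ∀ ρ : ℕ → Q, A.Run w ρ → { j | A.col1 (ρ j) }.Finite }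

/-- A run prefix of `A` on a finite word `p` (only `ρ 0, …, ρ p.length` are relevant). -/
def RunPrefix (A : UCB σ Q) (p : List σ) (ρ : ℕ → Q) : Prop :=
  ρ 0 ∈ A.init ∧ ∀ (j : ℕ) (h : j < p.length), ρ (j + 1) ∈ A.δ (ρ j) (p.get ⟨j, h⟩)

/-- The set of states reachable from a set of states while reading a finite word. -/
def postSet (A : UCB σ Q) : Set Q → List σ → Set Q
  | S, [] => S
  | S, a :: u => postSet A (⋃ q ∈ S, A.δ q a) u

end UCB

/-- The set `CF(A,k)` of `k`-counting functions, as integer-valued functions. -/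
def CFset (Q : Type) (k : ℕ) : Set (Q → ℤ) :=
  { f | ∀ q, -1 ≤ f q ∧ f q ≤ (k : ℤ) + 1 }

/-- The transition function `δ^D` of the determinization `D(A,k)` on counting functions. -/
noncomputable def detTransFun {σ Q : Type} [Fintype Q] (A : UCB σ Q) (k : ℕ)
    (f : Q → ℤ) (a : σ) : Q → ℤ := fun q =>
  let pred : Finset Q := Finset.univ.filter fun q' => q ∈ A.δ q' a ∧ 0 ≤ f q'
  if h : pred.Nonempty then
    min (pred.sup' h f + (if A.col1 q then 1 else 0)) ((k : ℤ) + 1)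
  else -1

/-- The (unique) run of `D(A,k)` on an ω-word `w`, starting from `f`. -/
noncomputable def detRun {σ Q : Type} [Fintype Q] (A : UCB σ Q) (k : ℕ)
    (f : Q → ℤ) (w : ℕ → σ) : ℕ → Q → ℤ
  | 0 => f
  | n + 1 => detTransFun A k (detRun A k f w n) (w n)

/-- The state of `D(A,k)` reached from `f` after reading a finite word. -/
noncomputable def detPostW {σ Q : Type} [Fintype Q] (A : UCB σ Q) (k : ℕ) :
    (Q → ℤ) → List σ → Q → ℤ
  | f, [] => f
  | f, a :: u => detPostW A k (detTransFun A k f a) u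

/-- The initial counting function `f₀` of `D(A,k)`. -/
noncomputable def initCF {σ Q : Type} (A : UCB σ Q) : Q → ℤ := fun q =>
  if q ∈ A.init then (if A.col1 q then 1 else 0) else -1

/-- `L(D(A,k)[f])`: ω-words whose run of `D(A,k)` from `f` never visits an unsafe
counting function (one taking the value `k+1`). -/
def langD {σ Q : Type} [Fintype Q] (A : UCB σ Q) (k : ℕ) (f : Q → ℤ) :
    Set (ℕ → σ) :=
  { w | ∀ n, ¬ ∃ q, detRun A k f w n q = (k : ℤ) + 1 }

/-- A complete deterministic safety automaton: the set `bad` of unsafe states is a trap. -/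
structure DetSafety (σ Q : Type) where
  start : Q
  δ : Q → σ → Q
  bad : Set Q
  trap : ∀ q ∈ bad, ∀ a, δ q a ∈ bad

namespace DetSafety

variable {σ Q : Type}

/-- State reached after reading a finite word. -/
def postW (A : DetSafety σ Q) : Q → List σ → Q
  | q, [] => q
  | q, a :: u => postW A (A.δ q a) u

/-- The run of a deterministic automaton on an ω-word. -/
def runOn (A : DetSafety σ Q) (w : ℕ → σ) : ℕ → Q
  | 0 => A.start
  | n + 1 => A.δ (runOn A w n) (w n)

/-- The (safety) ω-language: the run never enters an unsafe state. -/
def omegaLang (A : DetSafety σ Q) : Set (ℕ → σ) :=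
  { w | ∀ n, runOn A w n ∉ A.bad }

end DetSafety

/-- A complete deterministic automaton (no acceptance condition). -/
structure DetAuto (σ Q : Type) where
  start : Q
  δ : Q → σ → Q

/-- State reached after reading a finite word. -/
def DetAuto.postW {σ Q : Type} (A : DetAuto σ Q) : Q → List σ → Q
  | q, [] => q
  | q, a :: u => DetAuto.postW A (A.δ q a) u

/-- Domination order between collections: every element of `A` is below some element of `B`. -/
def acLE {α : Type} (r : α → α → Prop) (A B : Set α) : Prop :=
  ∀ x ∈ A, ∃ y ∈ B, r x y

/-- Downward closure of a collection of subsets of `Y`. -/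
def dcl {Y : Type} (A : Set (Set Y)) : Set (Set Y) :=
  { X | ∃ X' ∈ A, X ⊆ X' }

/-- The merged relation `U(∼, p)` for a non-congruent point with successors `s, s'`. -/
def Umerge {M : Type} (r : M → M → Prop) (s s' : M) : M → M → Prop :=
  fun y y' => r y y' ∨ (r y s ∧ r y' s') ∨ (r y' s ∧ r y s')

/-- Prefix closure of a set of finite words over `I × O`. -/
def prefsE {I O : Type} (E : Set (List (I × O))) : Set (List (I × O)) :=
  { u | ∃ e ∈ E, u <+: e }

/-- Consistency of a set of examples: the output is uniquely determined by each
prefix ending with an input. -/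
def ConsistentE {I O : Type} (E : Set (List (I × O))) : Prop :=
  ∀ (u : List (I × O)) (i : I) (o o' : O),
    (u ++ [(i, o)]) ∈ prefsE E → (u ++ [(i, o')]) ∈ prefsE E → o = o'

/-- The prefix-tree acceptor `PTA(E)`: states are the prefixes of `E` (together with ε). -/
noncomputable def PTA {I O : Type} (E : Set (List (I × O))) :
    PreMealy I O (↥(insert ([] : List (I × O)) (prefsE E))) where
  init := ⟨[], Set.mem_insert _ _⟩
  trans := fun u i =>
    if h : ∃ o : O, (u.1 ++ [(i, o)]) ∈ prefsE E then
      some (h.choose, ⟨u.1 ++ [(i, h.choose)], Set.mem_insert_of_mem _ h.choose_spec⟩)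
    else none

/-- The fixpoint labelling `F*` of the states of a preMealy machine by counting functions. -/
noncomputable def Fstar {I O M Q : Type} [Fintype Q] (P : PreMealy I O M)
    (A : UCB (I ⊕ O) Q) (k : ℕ) (m : M) : Q → ℤ := fun q =>
  sSup (insert (-1 : ℤ)
    { z | ∃ u ∈ P.leftLang m, detPostW A k (initCF A) (flattenWord u) q = z })

/-! The transition `δ^D` is monotone and never exceeds `k + 1`, so the run of `D(A,k)` from
`f₁ ⪯ f₂` stays pointwise below the run from `f₂`: whenever it reaches the unsafe value `k + 1`,
so does the run from `f₂`. Hence `L(D(A,k)[f₂]) ⊆ L(D(A,k)[f₁])`, and a Mealy machine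
realizing the former also realizes the latter. -/

section Determinization

variable {σ Q : Type} [Fintype Q] (A : UCB σ Q) (k : ℕ)

lemma detTransFun_mem_CFset (f : Q → ℤ) (a : σ) : detTransFun A k f a ∈ CFset Q k := by
  intro q
  unfold detTransFun
  dsimp only
  split
  · rename_i hpred
    obtain ⟨x, hx⟩ := id hpred
    have hx₀ : 0 ≤ f x := (Finset.mem_filter.mp hx).2.2
    have := Finset.le_sup' f hx
    have : (0 : ℤ) ≤ if A.col1 q then 1 else 0 := by split <;> omega
    exact ⟨le_min (by omega) (by omega), min_le_right _ _⟩
  · omega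

lemma detTransFun_mono {f g : Q → ℤ} (hfg : f ≤ g) (a : σ) :
    detTransFun A k f a ≤ detTransFun A k g a := by
  intro q
  have hsub : (Finset.univ.filter fun q' => q ∈ A.δ q' a ∧ 0 ≤ f q') ⊆
      Finset.univ.filter fun q' => q ∈ A.δ q' a ∧ 0 ≤ g q' :=
    Finset.monotone_filter_right _ fun q' _ hq' => ⟨hq'.1, hq'.2.trans (hfg q')⟩
  by_cases hf : (Finset.univ.filter fun q' => q ∈ A.δ q' a ∧ 0 ≤ f q').Nonempty
  · simp only [detTransFun, dif_pos hf, dif_pos (hf.mono hsub)]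
    gcongr min (?_ + _) _
    exact (Finset.sup'_mono_fun fun x _ => hfg x).trans (Finset.sup'_mono g hsub hf)
  · calc detTransFun A k f a q = -1 := dif_neg hf
      _ ≤ detTransFun A k g a q := (detTransFun_mem_CFset A k g a q).1

lemma detRun_mem_CFset {f : Q → ℤ} (hf : f ∈ CFset Q k) (w : ℕ → σ) :
    ∀ n, detRun A k f w n ∈ CFset Q k
  | 0 => hf
  | n + 1 => detTransFun_mem_CFset A k _ (w n)

lemma detRun_mono {f g : Q → ℤ} (hfg : f ≤ g) (w : ℕ → σ) :
    ∀ n, detRun A k f w n ≤ detRun A k g w n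
  | 0 => hfg
  | n + 1 => detTransFun_mono A k (detRun_mono hfg w n) (w n)

lemma langD_anti {f g : Q → ℤ} (hg : g ∈ CFset Q k) (hfg : f ≤ g) :
    langD A k g ⊆ langD A k f := by
  rintro w hw n ⟨q, hq⟩
  refine hw n ⟨q, le_antisymm (detRun_mem_CFset A k hg w n q).2 ?_⟩
  exact hq ▸ detRun_mono A k hfg w n q

end Determinization

lemma RealizableSigma.mono {I O : Type} {S T : Set (ℕ → I ⊕ O)} (hST : S ⊆ T)
    (hS : RealizableSigma I O S) : RealizableSigma I O T :=
  let ⟨N, hN, M, htot, hM⟩ := hS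
  ⟨N, hN, M, htot, fun w hw => hST (hM w hw)⟩

theorem stmt6_general {I O Q : Type} [Fintype Q]
    (A : UCB (I ⊕ O) Q) (k : ℕ) (f₁ f₂ : Q → ℤ)
    (h₁ : f₁ ∈ CFset Q k) (hle : ∀ q, f₁ q ≤ f₂ q)
    (h₂ : f₂ ∈ { f | f ∈ CFset Q k ∧ RealizableSigma I O (langD A k f) }) :
    f₁ ∈ { f | f ∈ CFset Q k ∧ RealizableSigma I O (langD A k f) } :=
  ⟨h₁, h₂.2.mono (langD_anti A k h₂.1 hle)⟩

/-- the set `W_k^A` of counting functions `f` with `L(D(A,k)[f])` realizable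
is downward closed for the pointwise order. -/
theorem stmt6 {I O Q : Type} [Fintype I] [Nonempty I] [Fintype O] [Nonempty O]
    [Fintype Q] [Nonempty Q]
    (A : UCB (I ⊕ O) Q) (k : ℕ) (f₁ f₂ : Q → ℤ)
    (h₁ : f₁ ∈ CFset Q k) (hle : ∀ q, f₁ q ≤ f₂ q)
    (h₂ : f₂ ∈ { f | f ∈ CFset Q k ∧ RealizableSigma I O (langD A k f) }) :
    f₁ ∈ { f | f ∈ CFset Q k ∧ RealizableSigma I O (langD A k f) } :=
  stmt6_general A k f₁ f₂ h₁ hle h₂
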